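/- In A_P the following relations hold: x·x_β·x = 0; x_{α+β}·x² + x_{α+β}·x = 0; x_{α+β}·y² + x_{α+β}·y = 0; x_β·(x+y)² + x_β·(x+y) = 0; and x_β·x² − x_β·x = 0. -/
import Mathlib


noncomputable section

/-- Generator `x` of the free algebra on six generators. -/
def XG : FreeAlgebra ℂ (Fin 6) := FreeAlgebra.ι ℂ 0
/-- Generator `y`. -/
def YG : FreeAlgebra ℂ (Fin 6) := FreeAlgebra.ι ℂ 1
/-- Generator `x_α`. -/
def XaG : FreeAlgebra ℂ (Fin 6) := FreeAlgebra.ι ℂ 2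
/-- Generator `x_{−α}`. -/
def XmaG : FreeAlgebra ℂ (Fin 6) := FreeAlgebra.ι ℂ 3
/-- Generator `x_β`. -/
def XbG : FreeAlgebra ℂ (Fin 6) := FreeAlgebra.ι ℂ 4
/-- Generator `x_{α+β}`. -/
def XabG : FreeAlgebra ℂ (Fin 6) := FreeAlgebra.ι ℂ 5

/-- The defining relations of the algebra `A_P` (Theorem 4.10 of the paper). -/
inductive relP : FreeAlgebra ℂ (Fin 6) → FreeAlgebra ℂ (Fin 6) → Prop
  | r1 : relP (XG * XaG) XaG
  | r2 : relP (XaG * XG) (-XaG)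
  | r3 : relP (XG * XmaG) (-XmaG)
  | r4 : relP (XmaG * XG) XmaG
  | r5 : relP (XaG * XmaG) ((1/2 : ℂ) • (XG * XG + XG))
  | r6 : relP (XmaG * XaG) ((1/2 : ℂ) • (XG * XG - XG))
  | r7 : relP (XG * YG) (YG * XG)
  | r8 : relP (XG * XG * XG) XG
  | r9 : relP (YG * XaG) (XaG * YG - XaG)
  | r10 : relP (YG * XmaG) (XmaG * YG + XmaG)
  | r11 : relP (XbG * YG) (-XbG)
  | r12 : relP (YG * XbG) XbG
  | r13 : relP (XabG * (XG + YG)) (-XabG)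
  | r14 : relP ((XG + YG) * XabG) XabG
  | r15 : relP (XG * XbG) (XbG * XG - XbG)
  | r16 : relP (XG * XabG) (XabG * XG + XabG)
  | r17 : relP (XaG * XbG) (-(XabG * YG))
  | r18 : relP (XbG * XaG) (-(XabG * YG) - XabG)
  | r19 : relP (XmaG * XabG) (-(XbG * XG) + XbG)
  | r20 : relP (XabG * XmaG) (-(XbG * XG))
  | r21 : relP (XaG * XaG) 0
  | r22 : relP (XmaG * XmaG) 0
  | r23 : relP (XbG * XbG) 0
  | r24 : relP (XabG * XabG) 0
  | r25 : relP (XaG * XabG) 0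
  | r26 : relP (XabG * XaG) 0
  | r27 : relP (XbG * XabG) 0
  | r28 : relP (XabG * XbG) 0
  | r29 : relP (XbG * XmaG) 0
  | r30 : relP (XmaG * XbG) 0

/-- The algebra `A_P`: the quotient of the free associative unital `ℂ`-algebra on six
generators by the two-sided ideal generated by the defining relations. -/
abbrev AP := RingQuot relP

/-- The image of `x` in `A_P`. -/
def xP : AP := RingQuot.mkAlgHom ℂ relP XG
/-- The image of `y` in `A_P`. -/
def yP : AP := RingQuot.mkAlgHom ℂ relP YG
/-- The image of `x_α` in `A_P`. -/
def xaP : AP := RingQuot.mkAlgHom ℂ relP XaG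
/-- The image of `x_{−α}` in `A_P`. -/
def xmaP : AP := RingQuot.mkAlgHom ℂ relP XmaG
/-- The image of `x_β` in `A_P`. -/
def xbP : AP := RingQuot.mkAlgHom ℂ relP XbG
/-- The image of `x_{α+β}` in `A_P`. -/
def xabP : AP := RingQuot.mkAlgHom ℂ relP XabG

/-- in `A_P` the relations `x·x_β·x = 0`, `x_{α+β}·x² + x_{α+β}·x = 0`,
`x_{α+β}·y² + x_{α+β}·y = 0`, `x_β·(x+y)² + x_β·(x+y) = 0`, and `x_β·x² − x_β·x = 0` hold. -/
theorem stmt6 :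
    xP * xbP * xP = 0 ∧
    xabP * xP ^ 2 + xabP * xP = 0 ∧
    xabP * yP ^ 2 + xabP * yP = 0 ∧
    xbP * (xP + yP) ^ 2 + xbP * (xP + yP) = 0 ∧
    xbP * xP ^ 2 - xbP * xP = 0 := by
  have ma : ∀ a b c : AP, a * b * c = a * (b * c) := fun a b c => mul_assoc a b c
  have nm : ∀ a b : AP, -a * b = -(a * b) := fun a b => neg_mul a b
  have mn : ∀ a b : AP, a * -b = -(a * b) := fun a b => mul_neg a b
  have sm : ∀ a b c : AP, (a - b) * c = a * c - b * c := fun a b c => sub_mul a b c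
  have mA : ∀ a b c : AP, a * (b + c) = a * b + a * c := fun a b c => mul_add a b c
  have mS : ∀ a b c : AP, a * (b - c) = a * b - a * c := fun a b c => mul_sub a b c
  have zm : ∀ a : AP, (0 : AP) * a = 0 := fun a => zero_mul a
  have mz : ∀ a : AP, a * (0 : AP) = 0 := fun a => mul_zero a
  have pw : ∀ a : AP, a ^ 2 = a * a := fun a => sq a
  have hr4 : xmaP * xP = xmaP := by
    have h := RingQuot.mkAlgHom_rel ℂ relP.r4
    simp only [map_mul] at h
    simpa only [xmaP, xP] using h
  have hr10 : yP * xmaP = xmaP * yP + xmaP := by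
    have h := RingQuot.mkAlgHom_rel ℂ relP.r10
    simp only [map_mul, map_add] at h
    simpa only [yP, xmaP] using h
  have hr11 : xbP * yP = -xbP := by
    have h := RingQuot.mkAlgHom_rel ℂ relP.r11
    simp only [map_mul, map_neg] at h
    simpa only [xbP, yP] using h
  have hr13 : xabP * (xP + yP) = -xabP := by
    have h := RingQuot.mkAlgHom_rel ℂ relP.r13
    simp only [map_mul, map_add, map_neg] at h
    simpa only [xabP, xP, yP] using h
  have hr15 : xP * xbP = xbP * xP - xbP := by
    have h := RingQuot.mkAlgHom_rel ℂ relP.r15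
    simp only [map_mul, map_sub] at h
    simpa only [xP, xbP] using h
  have hr17 : xaP * xbP = -(xabP * yP) := by
    have h := RingQuot.mkAlgHom_rel ℂ relP.r17
    simp only [map_mul, map_neg] at h
    simpa only [xaP, xbP, xabP, yP] using h
  have hr20 : xabP * xmaP = -(xbP * xP) := by
    have h := RingQuot.mkAlgHom_rel ℂ relP.r20
    simp only [map_mul, map_neg] at h
    simpa only [xabP, xmaP, xbP, xP] using h
  have hr25 : xaP * xabP = 0 := by
    have h := RingQuot.mkAlgHom_rel ℂ relP.r25
    simp only [map_mul, map_zero] at h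
    simpa only [xaP, xabP] using h
  have hr29 : xbP * xmaP = 0 := by
    have h := RingQuot.mkAlgHom_rel ℂ relP.r29
    simp only [map_mul, map_zero] at h
    simpa only [xbP, xmaP] using h
  -- key derived relations
  have h1 : xbP * xP = -(xabP * xmaP) := by rw [hr20, neg_neg]
  have hA : xbP * xP * xP = xbP * xP := by
    rw [h1, nm, ma, hr4]
  have h4 : xabP * yP = -(xaP * xbP) := by rw [hr17, neg_neg]
  have h2 : xabP * xP = -xabP - xabP * yP := by
    have h := hr13
    rw [mA] at h
    exact eq_sub_of_add_eq h
  have h6 : xabP * xP = xaP * xbP - xabP := by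
    rw [h2, h4]; abel
  have h3 : xaP * xbP * xP = 0 := by
    rw [ma, h1, mn, ← ma, hr25, zm, neg_zero]
  have h7 : xabP * xP * xP = xabP - xaP * xbP := by
    conv_lhs => rw [h6]
    rw [sm, h3, zero_sub, h6, neg_sub]
  have h8 : xabP * yP * yP = xaP * xbP := by
    rw [h4, nm, ma, hr11, mn, neg_neg]
  have hma' : xmaP * yP = yP * xmaP - xmaP := eq_sub_of_add_eq hr10.symm
  have h9 : xabP * yP * xmaP = 0 := by
    rw [h4, nm, ma, hr29, mz, neg_zero]
  have h10 : xbP * xP * yP = -(xbP * xP) := by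
    conv_lhs => rw [h1]
    rw [nm, ma, hma', mS, ← ma, h9, zero_sub, neg_neg, hr20]
  have hb : xbP * (xP + yP) = xbP * xP - xbP := by
    rw [mA, hr11]; abel
  refine ⟨?_, ?_, ?_, ?_, ?_⟩
  · rw [hr15, sm, hA, sub_self]
  · rw [pw, ← ma, h7, h6]; abel
  · rw [pw, ← ma, h8, h4]; abel
  · rw [pw, ← ma, hb, sm, mA, mA, hA, h10, hr11]; abel
  · rw [pw, ← ma, hA, sub_self]
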